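/- arXiv:2405.18895 — 2 statements merged into one kernel-verified Lean document; each statement's English description precedes it below -/
import Mathlib

section
/- Let ν ≥ 2 be a natural number, set n := ν²−2, and let a_j denote the coefficient of X^j in P_{2,n} = (X−1)^2(X+1)^n (a polynomial of degree ν²). Then: a_j > 0 for ν(ν+1)/2 < j ≤ ν²; a_{ν(ν+1)/2} = 0; a_j < 0 for ν(ν−1)/2 < j < ν(ν+1)/2; a_{ν(ν−1)/2} = 0; and a_j > 0 for 0 ≤ j < ν(ν−1)/2. (That is, the generalized sign pattern of P_{2,ν²−2} is Σ_{ν(ν−1)/2, 0, ν−1, 0, ν(ν−1)/2}.) -/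
open Polynomial


lemma cgen (n j : ℕ) : ((X - 1)^2 * (X+1)^n : ℝ[X]).coeff j
    = (if 2 ≤ j then (n.choose (j-2) : ℝ) else 0)
      - 2 * (if 1 ≤ j then (n.choose (j-1):ℝ) else 0) + n.choose j := by
  have h2 : (C (2:ℝ)) = 2 := map_ofNat C 2
  have hp' : ((X - 1)^2 * (X+1)^n : ℝ[X])
      = (X+1)^n * X^2 - (C 2) * ((X+1)^n * X^1) + (X+1)^n := by
    rw [h2]; ring
  rw [hp']
  simp only [coeff_sub, coeff_add, coeff_C_mul, coeff_mul_X_pow', coeff_X_add_one_pow]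

lemma c0' (n : ℕ) : ((X - 1)^2 * (X+1)^n : ℝ[X]).coeff 0 = 1 := by
  rw [cgen]; simp

lemma c1' (n : ℕ) : ((X - 1)^2 * (X+1)^n : ℝ[X]).coeff 1 = (n:ℝ) - 2 := by
  rw [cgen]; simp; ring

lemma ck' (n k : ℕ) : ((X - 1)^2 * (X+1)^n : ℝ[X]).coeff (k+2)
    = (n.choose k : ℝ) - 2 * (n.choose (k+1):ℝ) + n.choose (k+2) := by
  rw [cgen]; simp

lemma key (n k : ℕ) (hk : k ≤ n) :
    ((k:ℝ)+1)*((k:ℝ)+2) * ((n.choose k : ℝ) - 2*(n.choose (k+1)) + n.choose (k+2))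
      = (n.choose k : ℝ) * (((n:ℝ)+2 - 2*((k:ℝ)+2))^2 - ((n:ℝ)+2)) := by
  have e1 := Nat.choose_succ_right_eq n k
  have e2 := Nat.choose_succ_right_eq n (k+1)
  have h1 : ((n.choose (k+1) : ℝ)) * ((k:ℝ)+1) = (n.choose k : ℝ) * ((n:ℝ) - k) := by
    have := congrArg (Nat.cast : ℕ → ℝ) e1
    push_cast [Nat.cast_sub hk] at this
    linarith [this]
  have h2 : ((n.choose (k+2) : ℝ)) * ((k:ℝ)+2) = (n.choose (k+1) : ℝ) * ((n:ℝ) - k - 1) := by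
    have := congrArg (Nat.cast : ℕ → ℝ) e2
    rcases Nat.lt_or_ge k n with h | h
    · push_cast [Nat.cast_sub h] at this
      linarith [this]
    · have hkn : k = n := le_antisymm hk h
      subst hkn
      simp [Nat.choose_succ_self_right] at this ⊢
      simp [Nat.choose_eq_zero_of_lt]
  nlinarith [h1, h2, sq_nonneg ((k:ℝ)+1)]

lemma signk (n k : ℕ) (hk : k ≤ n) :
    ∃ c : ℝ, 0 < c ∧ ((X - 1)^2 * (X+1)^n : ℝ[X]).coeff (k+2)
      = c * (((n:ℝ)+2 - 2*((k:ℝ)+2))^2 - ((n:ℝ)+2)) := by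
  have hc : (0:ℝ) < (n.choose k : ℝ) := by exact_mod_cast Nat.choose_pos hk
  have hP : (0:ℝ) < ((k:ℝ)+1)*((k:ℝ)+2) := by positivity
  refine ⟨(n.choose k : ℝ) / (((k:ℝ)+1)*((k:ℝ)+2)), by positivity, ?_⟩
  rw [ck']
  have hkey := key n k hk
  field_simp
  linarith [hkey]


set_option maxHeartbeats 1600000 in
/-- For `ν ≥ 2` and `n = ν² - 2`, the generalized sign pattern of
`P_{2,n} = (X-1)^2 (X+1)^n` is `Σ_{ν(ν-1)/2, 0, ν-1, 0, ν(ν-1)/2}`. -/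
theorem generalized_sign_pattern_P_two_n (ν : ℕ) (hν : 2 ≤ ν) (n : ℕ) (hn : n = ν ^ 2 - 2)
    (a : ℕ → ℝ) (ha : ∀ j, a j = ((X - 1) ^ 2 * (X + 1) ^ n : ℝ[X]).coeff j) :
    (∀ j, ν * (ν + 1) / 2 < j → j ≤ ν ^ 2 → 0 < a j) ∧
    a (ν * (ν + 1) / 2) = 0 ∧
    (∀ j, ν * (ν - 1) / 2 < j → j < ν * (ν + 1) / 2 → a j < 0) ∧
    a (ν * (ν - 1) / 2) = 0 ∧
    (∀ j, j < ν * (ν - 1) / 2 → 0 < a j) := by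
  have hn2 : n + 2 = ν ^ 2 := by
    have : 2 ≤ ν ^ 2 := by nlinarith
    omega
  have hT : 2 * (ν * (ν + 1) / 2) = ν * (ν + 1) := by
    have : 2 ∣ ν * (ν + 1) := (Nat.even_mul_succ_self ν).two_dvd
    omega
  have hS : 2 * (ν * (ν - 1) / 2) = ν * (ν - 1) := by
    have h0 : 2 ∣ (ν - 1) * (ν - 1 + 1) := (Nat.even_mul_succ_self (ν - 1)).two_dvd
    rw [show ν - 1 + 1 = ν from by omega] at h0
    have h' : (ν-1) * ν = ν * (ν-1) := Nat.mul_comm _ _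
    omega
  set T := ν * (ν + 1) / 2 with hTdef
  set S := ν * (ν - 1) / 2 with hSdef
  have hT2 : 2 * T = ν^2 + ν := by rw [hT]; ring
  have hS2 : 2 * S = ν^2 - ν := by
    rw [hS]; cases ν with
    | zero => simp
    | succ m => simp [Nat.succ_sub_one]; ring_nf; omega
  have hνν : ν ≤ ν^2 := by nlinarith
  have hS2' : 2 * S + ν = ν^2 := by omega
  have hV : (2:ℝ) ≤ (ν:ℝ) := by exact_mod_cast hν
  -- generic evaluation for j = k+2, k ≤ n
  have gen : ∀ k : ℕ, k ≤ n → ∃ c : ℝ, 0 < c ∧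
      a (k+2) = c * (((ν:ℝ)^2 - 2*((k:ℝ)+2))^2 - (ν:ℝ)^2) := by
    intro k hk
    obtain ⟨c, hc, hec⟩ := signk n k hk
    refine ⟨c, hc, ?_⟩
    rw [ha, hec]
    have : ((n:ℝ) + 2) = (ν:ℝ)^2 := by exact_mod_cast congrArg (Nat.cast (R := ℝ)) hn2
    rw [this]
  refine ⟨?_, ?_, ?_, ?_, ?_⟩
  · -- top positive
    intro j hj1 hj2
    have hjge : T + 1 ≤ j := hj1
    have hTge : 3 ≤ T := by nlinarith [hT2]
    obtain ⟨k, rfl⟩ : ∃ k, j = k + 2 := ⟨j - 2, by omega⟩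
    have hk : k ≤ n := by omega
    obtain ⟨c, hc, he⟩ := gen k hk
    rw [he]
    have h2j : (ν:ℝ)^2 + (ν:ℝ) + 2 ≤ 2*((k:ℝ)+2) := by
      have : ν^2 + ν + 2 ≤ 2*(k+2) := by omega
      exact_mod_cast this
    have : 0 < ((ν:ℝ)^2 - 2*((k:ℝ)+2))^2 - (ν:ℝ)^2 := by nlinarith
    positivity
  · -- zero at T
    have hTge : 3 ≤ T := by nlinarith [hT2]
    obtain ⟨k, hk2⟩ : ∃ k, T = k + 2 := ⟨T - 2, by omega⟩
    rw [hk2]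
    have hk : k ≤ n := by omega
    obtain ⟨c, hc, he⟩ := gen k hk
    rw [he]
    have h2j : 2*((k:ℝ)+2) = (ν:ℝ)^2 + (ν:ℝ) := by
      have : 2*(k+2) = ν^2 + ν := by omega
      exact_mod_cast this
    have : ((ν:ℝ)^2 - 2*((k:ℝ)+2))^2 - (ν:ℝ)^2 = 0 := by rw [h2j]; ring
    rw [this, mul_zero]
  · -- middle negative
    intro j hj1 hj2
    have hSge : 1 ≤ S := by nlinarith [hS2']
    obtain ⟨k, rfl⟩ : ∃ k, j = k + 2 := ⟨j - 2, by omega⟩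
    have hk : k ≤ n := by omega
    obtain ⟨c, hc, he⟩ := gen k hk
    rw [he]
    have hlow : (ν:ℝ)^2 - (ν:ℝ) + 2 ≤ 2*((k:ℝ)+2) := by
      have : ν^2 - ν + 2 ≤ 2*(k+2) := by omega
      have h' : (ν^2 - ν : ℕ) + 2 ≤ 2*(k+2) := this
      have hcast : ((ν^2 - ν : ℕ):ℝ) = (ν:ℝ)^2 - ν := by
        push_cast [Nat.cast_sub hνν]; ring
      calc (ν:ℝ)^2 - (ν:ℝ) + 2 = ((ν^2 - ν : ℕ):ℝ) + 2 := by rw [hcast]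
        _ ≤ ((2*(k+2) : ℕ):ℝ) := by exact_mod_cast h'
        _ = 2*((k:ℝ)+2) := by push_cast; ring
    have hhigh : 2*((k:ℝ)+2) ≤ (ν:ℝ)^2 + (ν:ℝ) - 2 := by
      have : 2*(k+2) + 2 ≤ ν^2 + ν := by omega
      have := (Nat.cast_le (α := ℝ)).2 this
      push_cast at this
      linarith
    have hneg : ((ν:ℝ)^2 - 2*((k:ℝ)+2))^2 - (ν:ℝ)^2 < 0 := by nlinarith
    exact mul_neg_of_pos_of_neg hc hneg
  · -- zero at S
    rcases Nat.lt_or_ge ν 3 with h3 | h3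
    · have hq : ν ^ 2 = 4 := by nlinarith
      have hS1 : S = 1 := by omega
      have hn4 : n = 2 := by omega
      rw [hS1, ha, hn4, c1']
      norm_num
    · have hSge : 3 ≤ S := by nlinarith [hS2']
      obtain ⟨k, hk2⟩ : ∃ k, S = k + 2 := ⟨S - 2, by omega⟩
      rw [hk2]
      have hk : k ≤ n := by omega
      obtain ⟨c, hc, he⟩ := gen k hk
      rw [he]
      have h2j : 2*((k:ℝ)+2) + (ν:ℝ) = (ν:ℝ)^2 := by
        have : 2*(k+2) + ν = ν^2 := by omega
        exact_mod_cast this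
      have : ((ν:ℝ)^2 - 2*((k:ℝ)+2))^2 - (ν:ℝ)^2 = 0 := by
        have : (ν:ℝ)^2 - 2*((k:ℝ)+2) = ν := by linarith
        rw [this]; ring
      rw [this, mul_zero]
  · -- low positive
    intro j hj
    match j, hj with
    | 0, _ => rw [ha, c0']; norm_num
    | 1, hj =>
      have h3 : 3 ≤ ν := by
        by_contra h
        have hq : ν ^ 2 = 4 := by push_neg at h; nlinarith
        omega
      rw [ha, c1']
      have : (3:ℝ) ≤ (ν:ℝ) := by exact_mod_cast h3
      have hn' : (n:ℝ) = (ν:ℝ)^2 - 2 := by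
        have := congrArg (Nat.cast (R := ℝ)) hn2
        push_cast at this
        linarith
      nlinarith
    | (k+2), hj =>
      have hk : k ≤ n := by omega
      obtain ⟨c, hc, he⟩ := gen k hk
      rw [he]
      have hup : 2*((k:ℝ)+2) + (ν:ℝ) + 2 ≤ (ν:ℝ)^2 := by
        have : 2*(k+2) + 2 ≤ 2*S := by omega
        have h' : 2*(k+2) + ν + 2 ≤ ν^2 := by omega
        exact_mod_cast h'
      have : 0 < ((ν:ℝ)^2 - 2*((k:ℝ)+2))^2 - (ν:ℝ)^2 := by nlinarith
      positivity
end

section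
/- Let μ ≥ 4 be a natural number and let n be a natural number with (μ²−7)/3 < n < ((μ+1)²−7)/3 (equivalently μ² < 3n+7 < (μ+1)²). Let a_j denote the coefficient of X^j in P_{3,n} = (X−1)^3(X+1)^n, a polynomial of degree n+3. Define ρ and κ as follows: if n is odd, let ρ = (n+3−μ)/2, κ = μ/2 when μ is even, and ρ = (n+4−μ)/2, κ = (μ−1)/2 when μ is odd; if n is even, let ρ = (n+4−μ)/2, κ = μ/2 when μ is even, and ρ = (n+3−μ)/2, κ = (μ+1)/2 when μ is odd. Then: if n is even, all a_j are nonzero and the sign pattern of P_{3,n} read from the leading coefficient is ρ plus signs, κ minus signs, κ plus signs, ρ minus signs (Σ_{ρ,κ,κ,ρ}); if n is odd, then a_{(n+3)/2} = 0 is the only vanishing coefficient and the sign pattern is ρ plus signs, κ minus signs, the zero, κ plus signs, ρ minus signs (Σ_{ρ,κ,0,κ,ρ}). -/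
open Polynomial

lemma coeff_formula (n j : ℕ) :
    ((X - 1) ^ 3 * (X + 1) ^ n : ℝ[X]).coeff j =
      (if 3 ≤ j then (n.choose (j - 3) : ℝ) else 0)
      - 3 * (if 2 ≤ j then (n.choose (j - 2) : ℝ) else 0)
      + 3 * (if 1 ≤ j then (n.choose (j - 1) : ℝ) else 0)
      - n.choose j := by
  have h : ((X - 1) ^ 3 * (X + 1) ^ n : ℝ[X]) =
      (X + 1) ^ n * X ^ 3 - Polynomial.C 3 * ((X + 1) ^ n * X ^ 2)
        + Polynomial.C 3 * ((X + 1) ^ n * X ^ 1) - (X + 1) ^ n := by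
    rw [map_ofNat]
    ring
  rw [h]
  simp only [coeff_sub, coeff_add, coeff_C_mul, coeff_mul_X_pow', coeff_X_add_one_pow,
    mul_ite, mul_zero]

lemma chain0 (n j : ℕ) :
    n.choose j * ((n+1)*(n+2)*(n+3)) =
      (n+3).choose j * ((n+1-j)*(n+2-j)*(n+3-j)) := by
  have h1 := Nat.choose_mul_succ_eq n j
  have h2 := Nat.choose_mul_succ_eq (n+1) j
  have h3 := Nat.choose_mul_succ_eq (n+2) j
  calc n.choose j * ((n+1)*(n+2)*(n+3))
      = (n.choose j * (n+1)) * (n+2) * (n+3) := by ring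
    _ = ((n+1).choose j * (n+1-j)) * (n+2) * (n+3) := by rw [h1]
    _ = ((n+1).choose j * (n+1+1)) * (n+3) * (n+1-j) := by ring
    _ = ((n+2).choose j * (n+1+1-j)) * (n+3) * (n+1-j) := by rw [h2]
    _ = ((n+2).choose j * (n+2+1)) * ((n+2-j) * (n+1-j)) := by ring_nf
    _ = ((n+3).choose j * (n+2+1-j)) * ((n+2-j) * (n+1-j)) := by rw [h3]
    _ = (n+3).choose j * ((n+1-j)*(n+2-j)*(n+3-j)) := by ring_nf

lemma chain1 (n k : ℕ) :
    n.choose k * ((n+1)*(n+2)*(n+3)) =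
      (n+3).choose (k+1) * ((k+1)*(n+1-k)*(n+2-k)) := by
  have h1 := Nat.choose_mul_succ_eq n k
  have h2 := Nat.choose_mul_succ_eq (n+1) k
  have h3 := Nat.add_one_mul_choose_eq (n+2) k
  calc n.choose k * ((n+1)*(n+2)*(n+3))
      = (n.choose k * (n+1)) * (n+2) * (n+3) := by ring
    _ = ((n+1).choose k * (n+1-k)) * (n+2) * (n+3) := by rw [h1]
    _ = ((n+1).choose k * (n+1+1)) * (n+3) * (n+1-k) := by ring
    _ = ((n+2).choose k * (n+1+1-k)) * (n+3) * (n+1-k) := by rw [h2]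
    _ = ((n+2+1) * (n+2).choose k) * ((n+1+1-k) * (n+1-k)) := by ring
    _ = ((n+2+1).choose (k+1) * (k+1)) * ((n+1+1-k) * (n+1-k)) := by rw [h3]
    _ = (n+3).choose (k+1) * ((k+1)*(n+1-k)*(n+2-k)) := by ring_nf

lemma chain2 (n k : ℕ) :
    n.choose k * ((n+1)*(n+2)*(n+3)) =
      (n+3).choose (k+2) * ((k+1)*(k+2)*(n+1-k)) := by
  have h1 := Nat.choose_mul_succ_eq n k
  have h2 := Nat.add_one_mul_choose_eq (n+1) k
  have h3 := Nat.add_one_mul_choose_eq (n+2) (k+1)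
  calc n.choose k * ((n+1)*(n+2)*(n+3))
      = (n.choose k * (n+1)) * (n+2) * (n+3) := by ring
    _ = ((n+1).choose k * (n+1-k)) * (n+2) * (n+3) := by rw [h1]
    _ = ((n+1+1) * (n+1).choose k) * (n+3) * (n+1-k) := by ring
    _ = ((n+1+1).choose (k+1) * (k+1)) * (n+3) * (n+1-k) := by rw [h2]
    _ = ((n+2+1) * (n+1+1).choose (k+1)) * ((k+1) * (n+1-k)) := by ring
    _ = ((n+2+1).choose (k+1+1) * (k+1+1)) * ((k+1) * (n+1-k)) := by rw [h3]
    _ = (n+3).choose (k+2) * ((k+1)*(k+2)*(n+1-k)) := by ring_nf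

lemma chain3 (n k : ℕ) :
    n.choose k * ((n+1)*(n+2)*(n+3)) =
      (n+3).choose (k+3) * ((k+1)*(k+2)*(k+3)) := by
  have h1 := Nat.add_one_mul_choose_eq n k
  have h2 := Nat.add_one_mul_choose_eq (n+1) (k+1)
  have h3 := Nat.add_one_mul_choose_eq (n+2) (k+2)
  calc n.choose k * ((n+1)*(n+2)*(n+3))
      = ((n+1) * n.choose k) * (n+2) * (n+3) := by ring
    _ = ((n+1).choose (k+1) * (k+1)) * (n+2) * (n+3) := by rw [h1]
    _ = ((n+1+1) * (n+1).choose (k+1)) * (n+3) * (k+1) := by ring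
    _ = ((n+1+1).choose (k+1+1) * (k+1+1)) * (n+3) * (k+1) := by rw [h2]
    _ = ((n+2+1) * (n+1+1).choose (k+1+1)) * ((k+1+1) * (k+1)) := by ring
    _ = ((n+2+1).choose (k+2+1) * (k+2+1)) * ((k+1+1) * (k+1)) := by rw [h3]
    _ = (n+3).choose (k+3) * ((k+1)*(k+2)*(k+3)) := by ring_nf


lemma castEq {a b : ℕ} (h : a = b) : (a : ℝ) = (b : ℝ) := by exact_mod_cast h

lemma keyId (n j : ℕ) (hn : 4 ≤ n) (hj : j ≤ n + 3) :
    (((n:ℝ)+1)*((n:ℝ)+2)*((n:ℝ)+3)) * ((X - 1) ^ 3 * (X + 1) ^ n : ℝ[X]).coeff j =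
      (((n+3).choose j : ℝ)) *
        ((2*(j:ℝ) - ((n:ℝ)+3))^3 - (3*(n:ℝ)+7)*(2*(j:ℝ) - ((n:ℝ)+3))) := by
  rw [coeff_formula]
  obtain ⟨m, rfl⟩ : ∃ m, n = m + 4 := ⟨n - 4, by omega⟩
  match j, hj with
  | 0, _ =>
    simp only [Nat.choose_zero_right]
    norm_num
    ring
  | 1, _ =>
    have e1 := chain1 (m+4) 0
    rw [show (0:ℕ)+1 = 1 from rfl, show m+4+1-0 = m+5 by omega,
      show m+4+2-0 = m+6 by omega] at e1
    have E1 := castEq e1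
    have e0 := chain0 (m+4) 1
    rw [show m+4+1-1 = m+4 by omega, show m+4+2-1 = m+5 by omega,
      show m+4+3-1 = m+6 by omega] at e0
    have E0 := castEq e0
    simp only [Nat.choose_zero_right, Nat.choose_one_right] at E1 E0 ⊢
    norm_num
    push_cast at E1 E0 ⊢
    linear_combination 3*E1 - E0
  | 2, _ =>
    have e2 := chain2 (m+4) 0
    rw [show (0:ℕ)+1 = 1 from rfl, show (0:ℕ)+2 = 2 from rfl,
      show m+4+1-0 = m+5 by omega] at e2
    have E2 := castEq e2
    have e1 := chain1 (m+4) 1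
    rw [show m+4+1-1 = m+4 by omega, show m+4+2-1 = m+5 by omega,
      show (1:ℕ)+1 = 2 from rfl] at e1
    have E1 := castEq e1
    have e0 := chain0 (m+4) 2
    rw [show m+4+1-2 = m+3 by omega, show m+4+2-2 = m+4 by omega,
      show m+4+3-2 = m+5 by omega] at e0
    have E0 := castEq e0
    simp only [Nat.choose_zero_right, Nat.choose_one_right] at E2 E1 E0 ⊢
    norm_num
    push_cast at E2 E1 E0 ⊢
    linear_combination -3*E2 + 3*E1 - E0
  | (j+3), hj =>
    rw [if_pos (by omega : 3 ≤ j+3), if_pos (by omega : 2 ≤ j+3),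
      if_pos (by omega : 1 ≤ j+3),
      show j+3-3 = j by omega, show j+3-2 = j+1 by omega, show j+3-1 = j+2 by omega]
    have hjn : j ≤ m + 4 := by omega
    obtain ⟨d, hd⟩ : ∃ d, m + 4 = j + d := ⟨m + 4 - j, by omega⟩
    rw [hd]
    match d with
    | 0 =>
      rw [show j+0 = j from rfl, Nat.choose_self,
        Nat.choose_eq_zero_of_lt (show j < j+1 by omega),
        Nat.choose_eq_zero_of_lt (show j < j+2 by omega),
        Nat.choose_eq_zero_of_lt (show j < j+3 by omega),
        Nat.choose_self]
      push_cast
      ring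
    | 1 =>
      have E3 := castEq (chain3 (j+1) j)
      have e2 := chain2 (j+1) (j+1)
      rw [show j+1+1-(j+1) = 1 by omega, show j+1+1 = j+2 from rfl,
        show j+1+2 = j+3 from rfl] at e2
      have E2 := castEq e2
      rw [show j+1+3 = j+4 from rfl] at E3 E2 ⊢
      rw [Nat.choose_eq_zero_of_lt (show j+1 < j+2 by omega),
        Nat.choose_eq_zero_of_lt (show j+1 < j+3 by omega),
        Nat.choose_succ_self_right j]
      simp only [Nat.choose_succ_self_right, Nat.choose_self] at E3 E2 ⊢
      push_cast at E3 E2 ⊢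
      linear_combination E3 - 3*E2
    | (e+2) =>
      have E3 := castEq (chain3 (j+(e+2)) j)
      have e2 := chain2 (j+(e+2)) (j+1)
      rw [show j+(e+2)+1-(j+1) = e+2 by omega, show j+1+1 = j+2 from rfl,
        show j+1+2 = j+3 from rfl] at e2
      have E2 := castEq e2
      have e1 := chain1 (j+(e+2)) (j+2)
      rw [show j+(e+2)+1-(j+2) = e+1 by omega, show j+(e+2)+2-(j+2) = e+2 by omega,
        show j+2+1 = j+3 from rfl] at e1
      have E1 := castEq e1
      have e0 := chain0 (j+(e+2)) (j+3)
      rw [show j+(e+2)+1-(j+3) = e by omega, show j+(e+2)+2-(j+3) = e+1 by omega,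
        show j+(e+2)+3-(j+3) = e+2 by omega] at e0
      have E0 := castEq e0
      push_cast at E3 E2 E1 E0 ⊢
      linear_combination E3 - 3*E2 + 3*E1 - E0

lemma Gpos (mu : ℕ) (s t : ℤ) (hmu : 4 ≤ mu) (h1 : (mu:ℤ)^2 < s) (h2 : s < ((mu:ℤ)+1)^2)
    (h : (mu:ℤ)+1 ≤ t ∨ (-(mu:ℤ) ≤ t ∧ t ≤ -1)) : 0 < t^3 - s*t := by
  have hmu' : (4:ℤ) ≤ (mu:ℤ) := by exact_mod_cast hmu
  rcases h with h | ⟨ha, hb⟩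
  · have ht : 0 < t := by linarith
    have hsq : ((mu:ℤ)+1)*((mu:ℤ)+1) ≤ t*t :=
      mul_le_mul h h (by linarith) (by linarith)
    have h' : 0 < t*t - s := by nlinarith
    nlinarith [mul_pos ht h']
  · have ht : 0 < -t := by linarith
    have hsq : (-t)*(-t) ≤ (mu:ℤ)*(mu:ℤ) :=
      mul_le_mul (by linarith) (by linarith) (by linarith) (by linarith)
    have h' : 0 < s - t*t := by nlinarith
    nlinarith [mul_pos ht h']

lemma Gneg (mu : ℕ) (s t : ℤ) (hmu : 4 ≤ mu) (h1 : (mu:ℤ)^2 < s) (h2 : s < ((mu:ℤ)+1)^2)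
    (h : t ≤ -((mu:ℤ)+1) ∨ (1 ≤ t ∧ t ≤ (mu:ℤ))) : t^3 - s*t < 0 := by
  have h' : (mu:ℤ)+1 ≤ -t ∨ (-(mu:ℤ) ≤ -t ∧ -t ≤ -1) := by
    rcases h with h | ⟨ha, hb⟩
    · left; linarith
    · right; exact ⟨by linarith, by linarith⟩
  have := Gpos mu s (-t) hmu h1 h2 h'
  nlinarith [this]

lemma Gne (mu : ℕ) (s t : ℤ) (hmu : 4 ≤ mu) (h1 : (mu:ℤ)^2 < s) (h2 : s < ((mu:ℤ)+1)^2)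
    (ht : t ≠ 0) : t^3 - s*t ≠ 0 := by
  have hmu' : (4:ℤ) ≤ (mu:ℤ) := by exact_mod_cast hmu
  intro h0
  have hfac : t * (t^2 - s) = 0 := by linarith [h0]; 
  rcases mul_eq_zero.mp hfac with h | h
  · exact ht h
  · have hts : t^2 = s := by linarith
    rcases le_or_gt 0 t with hp | hp
    · have h3 : (mu:ℤ) < t := by nlinarith
      have h4 : (mu:ℤ)+1 ≤ t := by omega
      nlinarith
    · have h3 : (mu:ℤ) < -t := by nlinarith
      have h4 : (mu:ℤ)+1 ≤ -t := by omega
      nlinarith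

lemma coeff_fromG (n j : ℕ) (hn : 4 ≤ n) (hj : j ≤ n + 3) :
    ((X - 1) ^ 3 * (X + 1) ^ n : ℝ[X]).coeff j =
      (((n+3).choose j : ℝ)) *
        (((2*(j:ℤ) - ((n:ℤ)+3))^3 - (3*(n:ℤ)+7)*(2*(j:ℤ) - ((n:ℤ)+3)) : ℤ) : ℝ) /
        (((n:ℝ)+1)*((n:ℝ)+2)*((n:ℝ)+3)) := by
  have key := keyId n j hn hj
  have hD : (0:ℝ) < ((n:ℝ)+1)*((n:ℝ)+2)*((n:ℝ)+3) := by positivity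
  rw [eq_div_iff (ne_of_gt hD)]
  push_cast
  linear_combination key

lemma coeff_pos (mu n j : ℕ) (hn : 4 ≤ n) (hmu : 4 ≤ mu)
    (h1 : mu^2 < 3*n+7) (h2 : 3*n+7 < (mu+1)^2) (hj : j ≤ n+3)
    (h : (mu:ℤ)+1 ≤ 2*(j:ℤ)-((n:ℤ)+3) ∨
      (-(mu:ℤ) ≤ 2*(j:ℤ)-((n:ℤ)+3) ∧ 2*(j:ℤ)-((n:ℤ)+3) ≤ -1)) :
    0 < ((X - 1) ^ 3 * (X + 1) ^ n : ℝ[X]).coeff j := by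
  rw [coeff_fromG n j hn hj]
  have hG := Gpos mu (3*(n:ℤ)+7) (2*(j:ℤ)-((n:ℤ)+3)) hmu
    (by exact_mod_cast h1) (by exact_mod_cast h2) h
  have hC : (0:ℝ) < ((n+3).choose j : ℝ) := by
    exact_mod_cast Nat.choose_pos hj
  have hD : (0:ℝ) < ((n:ℝ)+1)*((n:ℝ)+2)*((n:ℝ)+3) := by positivity
  apply div_pos (mul_pos hC (by exact_mod_cast hG)) hD

lemma coeff_neg (mu n j : ℕ) (hn : 4 ≤ n) (hmu : 4 ≤ mu)
    (h1 : mu^2 < 3*n+7) (h2 : 3*n+7 < (mu+1)^2) (hj : j ≤ n+3)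
    (h : 2*(j:ℤ)-((n:ℤ)+3) ≤ -((mu:ℤ)+1) ∨
      (1 ≤ 2*(j:ℤ)-((n:ℤ)+3) ∧ 2*(j:ℤ)-((n:ℤ)+3) ≤ (mu:ℤ))) :
    ((X - 1) ^ 3 * (X + 1) ^ n : ℝ[X]).coeff j < 0 := by
  rw [coeff_fromG n j hn hj]
  have hG := Gneg mu (3*(n:ℤ)+7) (2*(j:ℤ)-((n:ℤ)+3)) hmu
    (by exact_mod_cast h1) (by exact_mod_cast h2) h
  have hC : (0:ℝ) < ((n+3).choose j : ℝ) := by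
    exact_mod_cast Nat.choose_pos hj
  have hD : (0:ℝ) < ((n:ℝ)+1)*((n:ℝ)+2)*((n:ℝ)+3) := by positivity
  exact div_neg_of_neg_of_pos (mul_neg_of_pos_of_neg hC (by exact_mod_cast hG)) hD

lemma coeff_ne (mu n j : ℕ) (hn : 4 ≤ n) (hmu : 4 ≤ mu)
    (h1 : mu^2 < 3*n+7) (h2 : 3*n+7 < (mu+1)^2) (hj : j ≤ n+3)
    (h : 2*(j:ℤ)-((n:ℤ)+3) ≠ 0) :
    ((X - 1) ^ 3 * (X + 1) ^ n : ℝ[X]).coeff j ≠ 0 := by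
  rw [coeff_fromG n j hn hj]
  have hG := Gne mu (3*(n:ℤ)+7) (2*(j:ℤ)-((n:ℤ)+3)) hmu
    (by exact_mod_cast h1) (by exact_mod_cast h2) h
  have hC : (0:ℝ) < ((n+3).choose j : ℝ) := by
    exact_mod_cast Nat.choose_pos hj
  have hD : (0:ℝ) < ((n:ℝ)+1)*((n:ℝ)+2)*((n:ℝ)+3) := by positivity
  have hGr : (((2*(j:ℤ) - ((n:ℤ)+3))^3 - (3*(n:ℤ)+7)*(2*(j:ℤ) - ((n:ℤ)+3)) : ℤ) : ℝ) ≠ 0 := by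
    exact_mod_cast hG
  positivity

lemma coeff_zero (n j : ℕ) (hn : 4 ≤ n) (hj : j ≤ n+3)
    (h : 2*(j:ℤ)-((n:ℤ)+3) = 0) :
    ((X - 1) ^ 3 * (X + 1) ^ n : ℝ[X]).coeff j = 0 := by
  rw [coeff_fromG n j hn hj]
  rw [show ((2*(j:ℤ) - ((n:ℤ)+3))^3 - (3*(n:ℤ)+7)*(2*(j:ℤ) - ((n:ℤ)+3)) : ℤ) = 0 by
    rw [show (2*(j:ℤ) - ((n:ℤ)+3)) = 0 from h]; ring]
  simp


/-- For `μ ≥ 4` and `μ² < 3n+7 < (μ+1)²`, with `ρ`, `κ` defined according to the parities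
of `n` and `μ`, the sign pattern of `P_{3,n} = (X-1)^3 (X+1)^n` is `Σ_{ρ,κ,κ,ρ}` when `n`
is even, and `Σ_{ρ,κ,0,κ,ρ}` when `n` is odd (the zero being the coefficient of
`X^((n+3)/2)`, the only vanishing one). -/
theorem sign_pattern_P_three_n (μ n : ℕ) (hμ : 4 ≤ μ)
    (h1 : μ ^ 2 < 3 * n + 7) (h2 : 3 * n + 7 < (μ + 1) ^ 2)
    (ρ κ : ℕ)
    (hρκ : (Odd n → (Even μ → 2 * ρ = n + 3 - μ ∧ 2 * κ = μ) ∧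
                    (Odd μ → 2 * ρ = n + 4 - μ ∧ 2 * κ = μ - 1)) ∧
           (Even n → (Even μ → 2 * ρ = n + 4 - μ ∧ 2 * κ = μ) ∧
                     (Odd μ → 2 * ρ = n + 3 - μ ∧ 2 * κ = μ + 1)))
    (a : ℕ → ℝ) (ha : ∀ j, a j = ((X - 1) ^ 3 * (X + 1) ^ n : ℝ[X]).coeff j) :
    (Even n → ∀ j ≤ n + 3,
      a j ≠ 0 ∧
      (n + 3 - ρ < j → 0 < a j) ∧
      (n + 3 - ρ - κ < j ∧ j ≤ n + 3 - ρ → a j < 0) ∧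
      (ρ ≤ j ∧ j ≤ n + 3 - ρ - κ → 0 < a j) ∧
      (j < ρ → a j < 0)) ∧
    (Odd n →
      a ((n + 3) / 2) = 0 ∧
      ∀ j ≤ n + 3,
        (j ≠ (n + 3) / 2 → a j ≠ 0) ∧
        (n + 3 - ρ < j → 0 < a j) ∧
        ((n + 3) / 2 < j ∧ j ≤ n + 3 - ρ → a j < 0) ∧
        (ρ ≤ j ∧ j < (n + 3) / 2 → 0 < a j) ∧
        (j < ρ → a j < 0)) := by
  have h16 : 16 ≤ μ^2 := by nlinarith
  have hn4 : 4 ≤ n := by omega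
  have hμn : μ ≤ n := by
    by_contra hcon
    push_neg at hcon
    have h3 : (n+1)^2 ≤ μ^2 := Nat.pow_le_pow_left (by omega) 2
    nlinarith
  constructor
  · intro hne j hj
    obtain ⟨c, hc⟩ := hne
    have hall : (∃ b, μ = b + b ∧ 2*ρ = n+4-μ ∧ 2*κ = μ) ∨
        (∃ b, μ = 2*b+1 ∧ 2*ρ = n+3-μ ∧ 2*κ = μ+1) := by
      rcases Nat.even_or_odd μ with hE | hO
      · obtain ⟨b, hb⟩ := hE
        exact Or.inl ⟨b, hb, (hρκ.2 ⟨c, hc⟩).1 ⟨b, hb⟩⟩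
      · obtain ⟨b, hb⟩ := hO
        exact Or.inr ⟨b, hb, (hρκ.2 ⟨c, hc⟩).2 ⟨b, hb⟩⟩
    rcases hall with ⟨b, hb, hρ, hκ⟩ | ⟨b, hb, hρ, hκ⟩ <;>
    · refine ⟨?_, ?_, ?_, ?_, ?_⟩
      · rw [ha j]; exact coeff_ne μ n j hn4 hμ h1 h2 hj (by omega)
      · intro hr; rw [ha j]
        exact coeff_pos μ n j hn4 hμ h1 h2 hj (Or.inl (by omega))
      · intro hr; rw [ha j]
        exact coeff_neg μ n j hn4 hμ h1 h2 hj (Or.inr ⟨by omega, by omega⟩)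
      · intro hr; rw [ha j]
        exact coeff_pos μ n j hn4 hμ h1 h2 hj (Or.inr ⟨by omega, by omega⟩)
      · intro hr; rw [ha j]
        exact coeff_neg μ n j hn4 hμ h1 h2 hj (Or.inl (by omega))
  · intro hno
    obtain ⟨c, hc⟩ := hno
    have hall : (∃ b, μ = b + b ∧ 2*ρ = n+3-μ ∧ 2*κ = μ) ∨
        (∃ b, μ = 2*b+1 ∧ 2*ρ = n+4-μ ∧ 2*κ = μ-1) := by
      rcases Nat.even_or_odd μ with hE | hO
      · obtain ⟨b, hb⟩ := hE
        exact Or.inl ⟨b, hb, (hρκ.1 ⟨c, hc⟩).1 ⟨b, hb⟩⟩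
      · obtain ⟨b, hb⟩ := hO
        exact Or.inr ⟨b, hb, (hρκ.1 ⟨c, hc⟩).2 ⟨b, hb⟩⟩
    constructor
    · rw [ha]
      exact coeff_zero n ((n+3)/2) hn4 (by omega) (by omega)
    · intro j hj
      rcases hall with ⟨b, hb, hρ, hκ⟩ | ⟨b, hb, hρ, hκ⟩ <;>
      · refine ⟨?_, ?_, ?_, ?_, ?_⟩
        · intro hr; rw [ha j]; exact coeff_ne μ n j hn4 hμ h1 h2 hj (by omega)
        · intro hr; rw [ha j]
          exact coeff_pos μ n j hn4 hμ h1 h2 hj (Or.inl (by omega))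
        · intro hr; rw [ha j]
          exact coeff_neg μ n j hn4 hμ h1 h2 hj (Or.inr ⟨by omega, by omega⟩)
        · intro hr; rw [ha j]
          exact coeff_pos μ n j hn4 hμ h1 h2 hj (Or.inr ⟨by omega, by omega⟩)
        · intro hr; rw [ha j]
          exact coeff_neg μ n j hn4 hμ h1 h2 hj (Or.inl (by omega))
end
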